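/- Let u : ℝ → ℝⁿ lie on an integral curve C of a smooth vector field r satisfying ∇r(u)·r(u) = 0 for all u ∈ C, i.e. u(ρ) with du/dρ = r(u(ρ)). If ρ = ρ(x,t) solves ρ_t = a² ρ_{xx}, then U(x,t) := u(ρ(x,t)) satisfies U_t = a² U_{xx}. -/

import Mathlib

/-!
The structural condition says that the derivative of `p ↦ r (u p)` vanishes, so the vector field
is constant along its integral curve and the curve is a straight line `u p = u 0 + p • r (u 0)`.
Hence `U = u 0 + ρ • r (u 0)` depends affinely on `ρ`, and the heat equation passes from `ρ` to `U`.
-/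

theorem eq_of_forall_hasDerivAt_zero {F : Type*} [NormedAddCommGroup F] [NormedSpace ℝ F]
    {f : ℝ → F} (hf : ∀ x, HasDerivAt f 0 x) (x y : ℝ) : f x = f y :=
  is_const_of_deriv_eq_zero (fun z => (hf z).differentiableAt) (fun z => (hf z).deriv) x y

section IntegralCurve

variable {E : Type*} [NormedAddCommGroup E] [NormedSpace ℝ E] {r : E → E} {u : ℝ → E}

theorem hasDerivAt_vectorField_comp_integralCurve_eq_zero (hr : ∀ p, DifferentiableAt ℝ r (u p))
    (hu : ∀ p, HasDerivAt u (r (u p)) p) (hstruct : ∀ p, fderiv ℝ r (u p) (r (u p)) = 0) (p : ℝ) :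
    HasDerivAt (fun q => r (u q)) 0 p := by
  have := (hr p).hasFDerivAt.comp_hasDerivAt p (hu p)
  rwa [hstruct p] at this

theorem integralCurve_eq_line (hr : ∀ p, DifferentiableAt ℝ r (u p))
    (hu : ∀ p, HasDerivAt u (r (u p)) p) (hstruct : ∀ p, fderiv ℝ r (u p) (r (u p)) = 0) :
    u = fun p => u 0 + p • r (u 0) := by
  have hr_const : ∀ p, r (u p) = r (u 0) := fun p =>
    eq_of_forall_hasDerivAt_zero (hasDerivAt_vectorField_comp_integralCurve_eq_zero hr hu hstruct)
      p 0
  have hdiff : ∀ p, HasDerivAt (fun q => u q - q • r (u 0)) 0 p := fun p => by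
    have := (hu p).sub ((hasDerivAt_id p).smul_const (r (u 0)))
    rwa [hr_const p, one_smul, sub_self] at this
  funext p
  have := eq_of_forall_hasDerivAt_zero hdiff p 0
  rw [zero_smul, sub_zero] at this
  exact sub_eq_iff_eq_add.mp this

end IntegralCurve

theorem deriv_const_add_smul_const {E : Type*} [NormedAddCommGroup E] [NormedSpace ℝ E]
    {f : ℝ → ℝ} {x : ℝ} (hf : DifferentiableAt ℝ f x) (c v : E) :
    deriv (fun y => c + f y • v) x = deriv f x • v := by
  rw [deriv_const_add, deriv_smul_const hf]

theorem contact_wave_solves_heat_equation_general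
    (n : ℕ) (a : ℝ)
    (r : EuclideanSpace ℝ (Fin n) → EuclideanSpace ℝ (Fin n)) (hr : ContDiff ℝ 1 r)
    (u : ℝ → EuclideanSpace ℝ (Fin n))
    -- u is an integral curve of the vector field r
    (hu : ∀ p : ℝ, HasDerivAt u (r (u p)) p)
    -- structural condition ∇r·r = 0 along the curve
    (hstruct : ∀ p : ℝ, fderiv ℝ r (u p) (r (u p)) = 0)
    (ρ : ℝ → ℝ → ℝ)
    (hρx : ∀ t, ContDiff ℝ 2 (fun x => ρ x t))
    (hρt : ∀ x, Differentiable ℝ (fun t => ρ x t))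
    -- ρ solves the heat equation ρ_t = a² ρ_xx
    (hheat : ∀ x t, deriv (fun τ => ρ x τ) t
        = a ^ 2 * deriv (fun ξ => deriv (fun ζ => ρ ζ t) ξ) x) :
    ∀ x t, deriv (fun τ => u (ρ x τ)) t
      = a ^ 2 • deriv (fun ξ => deriv (fun ζ => u (ρ ζ t)) ξ) x := by
  intro x t
  have hρx_succ : ContDiff ℝ (1 + 1) (fun ξ => ρ ξ t) := hρx t
  have hρxx : Differentiable ℝ (deriv fun ξ => ρ ξ t) :=
    (contDiff_succ_iff_deriv.mp hρx_succ).2.2.differentiable one_ne_zero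
  have hUx : (fun ξ => deriv (fun ζ => u 0 + ρ ζ t • r (u 0)) ξ)
      = fun ξ => deriv (fun ζ => ρ ζ t) ξ • r (u 0) :=
    funext fun ξ => deriv_const_add_smul_const (hρx_succ.differentiable (by norm_num) ξ) _ _
  rw [integralCurve_eq_line (fun p => hr.differentiable one_ne_zero _) hu hstruct,
    deriv_const_add_smul_const (hρt x t), hUx, deriv_smul_const (hρxx x), hheat, mul_smul]

/-- the contact-wave profile `U(x,t) = u(ρ(x,t))` solves the linear
heat equation under the structural condition `∇r·r ≡ 0` on the integral curve. -/
theorem contact_wave_solves_heat_equation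
    (n : ℕ) (a : ℝ) (ha : 0 < a)
    (r : EuclideanSpace ℝ (Fin n) → EuclideanSpace ℝ (Fin n)) (hr : ContDiff ℝ 1 r)
    (u : ℝ → EuclideanSpace ℝ (Fin n))
    -- u is an integral curve of the vector field r
    (hu : ∀ p : ℝ, HasDerivAt u (r (u p)) p)
    -- structural condition ∇r·r = 0 along the curve
    (hstruct : ∀ p : ℝ, fderiv ℝ r (u p) (r (u p)) = 0)
    (ρ : ℝ → ℝ → ℝ)
    (hρx : ∀ t, ContDiff ℝ 2 (fun x => ρ x t))
    (hρt : ∀ x, Differentiable ℝ (fun t => ρ x t))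
    -- ρ solves the heat equation ρ_t = a² ρ_xx
    (hheat : ∀ x t, deriv (fun τ => ρ x τ) t
        = a ^ 2 * deriv (fun ξ => deriv (fun ζ => ρ ζ t) ξ) x) :
    ∀ x t, deriv (fun τ => u (ρ x τ)) t
      = a ^ 2 • deriv (fun ξ => deriv (fun ζ => u (ρ ζ t)) ξ) x :=
  contact_wave_solves_heat_equation_general n a r hr u hu hstruct ρ hρx hρt hheat
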